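/- Let μ be Lebesgue measure on the Borel σ-algebra of [0,1], let 1 ≤ p ≤ ∞, let S ⊆ [0,1] be a Borel set, and define T_S : L^p[0,1] → L^p[0,1] by T_S(f) = (∫_S f dμ)·χ_S. Then T_S ∧ I = 0 in the order bounded operators on L^p[0,1], i.e., T_S is disjoint from the identity operator. -/

import Mathlib

/-!
Let `0 ≤ f` and let `U ≤ T_S`, `U ≤ I`. For a measurable `A`, splitting `f = f·1_A + f·1_Aᶜ`
gives `U f ≤ (∫_{S ∩ A} f) χ_S + f·1_Aᶜ`. Taking `A` the whole line shows `U f ≤ 0` off `S`;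
taking `A` a small interval around a point of `S` bounds `U f` there by `∫_{S ∩ A} f`, which
tends to `0` as the interval shrinks because Lebesgue measure has no atoms. Hence `U f ≤ 0`.
-/

variable (E : Type*) [AddCommGroup E] [Lattice E] [Module ℝ E]
  [CovariantClass E E (· + ·) (· ≤ ·)] [PosSMulMono ℝ E]

/-- The order on order bounded operators: `A ≤ B` iff `A x ≤ B x` for all `x ≥ 0`. -/
def opLE (A B : E →ₗ[ℝ] E) : Prop := ∀ x : E, 0 ≤ x → A x ≤ B x

/-- An operator is order bounded when it maps order bounded sets to order bounded sets. -/
def IsOrderBoundedOp (T : E →ₗ[ℝ] E) : Prop :=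
  ∀ a b : E, ∃ c d : E, ∀ x : E, a ≤ x → x ≤ b → c ≤ T x ∧ T x ≤ d

/-- Band preserving: `T x` lies in the band generated by `x`; equivalently `T x ⊥ y`
whenever `x ⊥ y`. -/
def IsBandPreserving (T : E →ₗ[ℝ] E) : Prop :=
  ∀ x y : E, |x| ⊓ |y| = 0 → |T x| ⊓ |y| = 0

/-- An orthomorphism is an order bounded band preserving linear operator. -/
def IsOrthomorphism (T : E →ₗ[ℝ] E) : Prop :=
  IsOrderBoundedOp E T ∧ IsBandPreserving E T

/-- Membership in the band generated by a set `S` (in an Archimedean vector lattice this is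
the double disjoint complement of `S`). -/
def memBandGen (S : Set E) (w : E) : Prop :=
  ∀ u : E, (∀ s ∈ S, |u| ⊓ |s| = 0) → |u| ⊓ |w| = 0

/-- `P` is the band projection onto the band `B`: it maps into `B` and `x - P x` is
disjoint from `B` for every `x`. -/
def IsBandProjectionOnto (B : Set E) (P : E →ₗ[ℝ] E) : Prop :=
  (∀ x : E, P x ∈ B) ∧ (∀ x : E, ∀ b ∈ B, |x - P x| ⊓ |b| = 0)

/-- Order convergence of a net: there is a downward directed set `D` with infimum `0`
such that the net is eventually dominated by every member of `D`. -/
def OrderConvNet {ι : Type*} [Preorder ι] (y : ι → E) (l : E) : Prop :=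
  ∃ D : Set E, D.Nonempty ∧ DirectedOn (· ≥ ·) D ∧ IsGLB D 0 ∧
    ∀ d ∈ D, ∃ i₀ : ι, ∀ i : ι, i₀ ≤ i → |y i - l| ≤ d

/-- Unbounded order convergence of a net. -/
def UOConvNet {ι : Type*} [Preorder ι] (y : ι → E) (l : E) : Prop :=
  ∀ u : E, 0 ≤ u → OrderConvNet E (fun i => |y i - l| ⊓ u) 0

/-- Order convergence of a net of operators, in the operator order of the order bounded
operators: there is a downward directed set `D` of operators whose infimum among the
order bounded operators is `0`, eventually dominating `|T i - L|`. -/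
def OpOrderConvNet {ι : Type*} [Preorder ι] (T : ι → E →ₗ[ℝ] E) (L : E →ₗ[ℝ] E) : Prop :=
  ∃ D : Set (E →ₗ[ℝ] E), D.Nonempty ∧
    DirectedOn (fun A B => opLE E B A) D ∧
    (∀ d ∈ D, opLE E 0 d) ∧
    (∀ C : E →ₗ[ℝ] E, IsOrderBoundedOp E C → (∀ d ∈ D, opLE E C d) → opLE E C 0) ∧
    ∀ d ∈ D, ∃ i₀ : ι, ∀ i : ι, i₀ ≤ i → opLE E (L - T i) d ∧ opLE E (T i - L) d


open MeasureTheory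
open scoped ENNReal

/-- Lebesgue measure on the Borel σ-algebra of `[0,1]`. -/
noncomputable def mu01 : Measure ℝ := volume.restrict (Set.Icc 0 1)

open Filter Set Topology

instance : IsFiniteMeasure mu01 := by
  unfold mu01
  infer_instance

instance : NullSingletonClass mu01 := by
  unfold mu01
  infer_instance

/-- Rational endpoints make the family of hypotheses countable, so they hold simultaneously at
almost every `x`; absolute continuity of the integral then squeezes the bound to `0`. -/
theorem ae_nonpos_of_forall_Icc_le_setIntegral {μ : Measure ℝ} [IsFiniteMeasureOnCompacts μ]
    [NullSingletonClass μ] {f g : ℝ → ℝ} (hf : Integrable f μ)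
    (h : ∀ a b : ℝ, ∀ᵐ x ∂μ, x ∈ Icc a b → g x ≤ ∫ y in Icc a b, f y ∂μ) :
    g ≤ᵐ[μ] 0 := by
  have hrat : ∀ᵐ x ∂μ, ∀ q r : ℚ, x ∈ Icc (q : ℝ) r → g x ≤ ∫ y in Icc (q : ℝ) r, f y ∂μ :=
    ae_all_iff.2 fun q => ae_all_iff.2 fun r => h q r
  filter_upwards [hrat] with x hx
  have hsmall : Tendsto (fun δ => ∫ y in Icc (x - δ) (x + δ), |f y| ∂μ) (𝓝[>] 0) (𝓝 0) :=
    hf.abs.tendsto_setIntegral_nhds_zero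
      ((tendsto_measure_Icc μ x).mono_left nhdsWithin_le_nhds)
  refine ge_of_tendsto hsmall ?_
  filter_upwards [self_mem_nhdsWithin] with δ (hδ : 0 < δ)
  obtain ⟨q, hqδ, hqx⟩ := exists_rat_btwn (show x - δ < x by linarith)
  obtain ⟨r, hxr, hrδ⟩ := exists_rat_btwn (show x < x + δ by linarith)
  calc g x ≤ ∫ y in Icc (q : ℝ) r, f y ∂μ := hx q r ⟨hqx.le, hxr.le⟩
    _ ≤ ∫ y in Icc (q : ℝ) r, |f y| ∂μ := (le_abs_self _).trans abs_integral_le_integral_abs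
    _ ≤ ∫ y in Icc (x - δ) (x + δ), |f y| ∂μ :=
      setIntegral_mono_set hf.abs.integrableOn (ae_of_all _ fun _ => abs_nonneg _)
        (Icc_subset_Icc hqδ.le hrδ.le).eventuallyLE

section SetIntegralSMulIndicator

variable {α : Type*} [MeasurableSpace α] {μ : Measure α} {p : ℝ≥0∞} {S : Set α}
  {hS : MeasurableSet S} {hfin : μ S ≠ ⊤} {T U : Lp ℝ p μ →ₗ[ℝ] Lp ℝ p μ}

theorem coeFn_smul_indicatorConstLp_one (c : ℝ) :
    ⇑(c • indicatorConstLp p hS hfin (1 : ℝ)) =ᵐ[μ] S.indicator fun _ => c := by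
  filter_upwards [Lp.coeFn_smul c (indicatorConstLp p hS hfin (1 : ℝ)),
    indicatorConstLp_coeFn (p := p) (hs := hS) (hμs := hfin) (c := (1 : ℝ))] with x hsmul hind
  by_cases hx : x ∈ S <;> simp [hsmul, hind, hx]

theorem opLE_zero_of_eq_setIntegral_smul_indicator
    (hT : ∀ f : Lp ℝ p μ, T f = (∫ x in S, f x ∂μ) • indicatorConstLp p hS hfin (1 : ℝ)) :
    opLE (Lp ℝ p μ) 0 T := by
  intro f hf
  have hint : 0 ≤ ∫ x in S, f x ∂μ :=
    integral_nonneg_of_ae (ae_restrict_of_ae ((Lp.coeFn_nonneg f).mpr hf))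
  rw [LinearMap.zero_apply, hT f, ← Lp.coeFn_nonneg]
  filter_upwards [coeFn_smul_indicatorConstLp_one (hS := hS) (hfin := hfin) _] with x hx
  rw [hx]
  exact indicator_nonneg (fun _ _ => hint) x

theorem ae_le_indicator_setIntegral_of_opLE
    (hT : ∀ f : Lp ℝ p μ, T f = (∫ x in S, f x ∂μ) • indicatorConstLp p hS hfin (1 : ℝ))
    (hUT : opLE (Lp ℝ p μ) U T) (hUI : opLE (Lp ℝ p μ) U LinearMap.id)
    {f : Lp ℝ p μ} (hf : 0 ≤ f) {A : Set α} (hA : MeasurableSet A) :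
    ∀ᵐ x ∂μ, x ∈ A → U f x ≤ S.indicator (fun _ => ∫ y in A, f y ∂μ.restrict S) x := by
  have hf0 : 0 ≤ᵐ[μ] ⇑f := (Lp.coeFn_nonneg f).mpr hf
  have hgA : MemLp (A.indicator ⇑f) p μ := (Lp.memLp f).indicator hA
  set g := hgA.toLp _
  have hg : ⇑g =ᵐ[μ] A.indicator ⇑f := hgA.coeFn_toLp
  have hg0 : 0 ≤ g := by
    rw [← Lp.coeFn_nonneg]
    filter_upwards [hg, hf0] with x hx hx0
    rw [hx]
    exact indicator_nonneg (fun _ _ => hx0) x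
  have hgf : g ≤ f := by
    rw [← Lp.coeFn_le]
    filter_upwards [hg, hf0] with x hx hx0
    rw [hx]
    exact indicator_le_self' (fun _ _ => hx0) x
  have hTg : ⇑(T g) =ᵐ[μ] S.indicator fun _ => ∫ y in A, f y ∂μ.restrict S := by
    rw [hT g, integral_congr_ae (ae_restrict_of_ae hg), integral_indicator hA]
    exact coeFn_smul_indicatorConstLp_one _
  have hUf : U f ≤ T g + (f - g) :=
    calc U f = U g + U (f - g) := by rw [← map_add, add_sub_cancel]
      _ ≤ T g + (f - g) := add_le_add (hUT g hg0) (hUI (f - g) (sub_nonneg.mpr hgf))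
  filter_upwards [(Lp.coeFn_le _ _).mpr hUf, Lp.coeFn_add (T g) (f - g), Lp.coeFn_sub f g, hg,
    hTg] with x hle hadd hsub hgx hTgx hxA
  rwa [hadd, Pi.add_apply, hsub, Pi.sub_apply, hgx, indicator_of_mem hxA, sub_self, add_zero,
    hTgx] at hle

end SetIntegralSMulIndicator

theorem opLE_zero_of_opLE_setIntegral_smul_indicator_of_opLE_id {μ : Measure ℝ}
    [IsFiniteMeasure μ] [NullSingletonClass μ] {p : ℝ≥0∞} (hp : 1 ≤ p) {S : Set ℝ}
    {hS : MeasurableSet S} {hfin : μ S ≠ ⊤} {T U : Lp ℝ p μ →ₗ[ℝ] Lp ℝ p μ}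
    (hT : ∀ f : Lp ℝ p μ, T f = (∫ x in S, f x ∂μ) • indicatorConstLp p hS hfin (1 : ℝ))
    (hUT : opLE (Lp ℝ p μ) U T) (hUI : opLE (Lp ℝ p μ) U LinearMap.id) :
    opLE (Lp ℝ p μ) U 0 := by
  intro f hf
  have hbound := fun A (hA : MeasurableSet A) =>
    ae_le_indicator_setIntegral_of_opLE hT hUT hUI hf hA
  have hoff : ∀ᵐ x ∂μ, x ∉ S → U f x ≤ 0 := by
    filter_upwards [hbound univ MeasurableSet.univ] with x hx hxS
    simpa [indicator_of_notMem hxS] using hx (mem_univ x)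
  have hon : ⇑(U f) ≤ᵐ[μ.restrict S] 0 :=
    ae_nonpos_of_forall_Icc_le_setIntegral ((Lp.memLp f).integrable hp).restrict fun a b => by
      rw [ae_restrict_iff' hS]
      filter_upwards [hbound (Icc a b) measurableSet_Icc] with x hx hxS hxI
      simpa [indicator_of_mem hxS] using hx hxI
  rw [LinearMap.zero_apply, ← Lp.coeFn_le]
  filter_upwards [hoff, (ae_restrict_iff' hS).mp hon, Lp.coeFn_zero ℝ p μ] with x hxoff hxon h0
  rw [h0]
  by_cases hxS : x ∈ S
  · exact hxon hxS
  · exact hxoff hxS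

theorem stmt7 (p : ℝ≥0∞) (hp : 1 ≤ p)
    (S : Set ℝ) (hS : MeasurableSet S) (hfin : mu01 S ≠ ⊤)
    (T : Lp ℝ p mu01 →ₗ[ℝ] Lp ℝ p mu01)
    (hT : ∀ f : Lp ℝ p mu01,
      T f = (∫ x in S, f x ∂mu01) • indicatorConstLp p hS hfin (1:ℝ)) :
    opLE (Lp ℝ p mu01) 0 T ∧ opLE (Lp ℝ p mu01) 0 LinearMap.id ∧
      ∀ U : Lp ℝ p mu01 →ₗ[ℝ] Lp ℝ p mu01, IsOrderBoundedOp (Lp ℝ p mu01) U →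
        opLE (Lp ℝ p mu01) U T → opLE (Lp ℝ p mu01) U LinearMap.id →
          opLE (Lp ℝ p mu01) U 0 :=
  ⟨opLE_zero_of_eq_setIntegral_smul_indicator hT, fun _ hf => hf,
    fun _ _ hUT hUI => opLE_zero_of_opLE_setIntegral_smul_indicator_of_opLE_id hp hT hUT hUI⟩
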